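/- arXiv:2212.01939 — 2 statements merged into one kernel-verified Lean document; each statement's English description precedes it below -/
import Mathlib

section
/- Let Z be a compact metric space, f : Z → ℝ a bounded measurable function, μ a probability measure on Z, and let Υ = argmax f with f* = sup f. Assume f is continuous on an ε-neighborhood of Υ for some ε > 0, and μ assigns positive mass to every ε-neighborhood of Υ. Then for every δ > 0, the normalized measures λ_k(A) = (∫_A exp(k f) dμ) / (∫_Z exp(k f) dμ) satisfy λ_k({z : f(z) ≥ f* − δ}) → 1 as k → ∞. -/
open MeasureTheory Filter Real

theorem stmt_0 {Z : Type*} [MetricSpace Z] [CompactSpace Z] [Nonempty Z]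
    [MeasurableSpace Z] [BorelSpace Z]
    (μ : Measure Z) [IsProbabilityMeasure μ]
    (f : Z → ℝ) (hf : Measurable f) (c : ℝ) (hb : ∀ z, |f z| ≤ c)
    (fstar : ℝ) (hfstar : fstar = ⨆ z, f z)
    (Υ : Set Z) (hΥ : Υ = {z | f z = fstar})
    (ε₀ : ℝ) (hε₀ : 0 < ε₀)
    (hcont : ContinuousOn f {z | Metric.infDist z Υ ≤ ε₀})
    (hmass : ∀ ε > (0 : ℝ), 0 < μ {z | Metric.infDist z Υ ≤ ε})
    (δ : ℝ) (hδ : 0 < δ) :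
    Tendsto (fun k : ℕ =>
        (∫ z in {z | fstar - δ ≤ f z}, Real.exp (k * f z) ∂μ) /
        (∫ z, Real.exp (k * f z) ∂μ)) atTop (nhds 1) := by
  have hbdd : BddAbove (Set.range f) := ⟨c, by rintro _ ⟨x, rfl⟩; exact (abs_le.1 (hb x)).2⟩
  have hle : ∀ z, f z ≤ fstar := fun z => hfstar ▸ le_ciSup hbdd z
  -- Υ is nonempty
  have hΥne : Υ.Nonempty := by
    by_contra hne
    rw [Set.not_nonempty_iff_eq_empty] at hne
    have hcf : Continuous f := by
      rw [← continuousOn_univ]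
      have : {z : Z | Metric.infDist z Υ ≤ ε₀} = Set.univ := by
        ext z; simp [hne, Metric.infDist_empty, hε₀.le]
      rwa [this] at hcont
    obtain ⟨z, -, hz⟩ := isCompact_univ.exists_isMaxOn Set.univ_nonempty
      hcf.continuousOn
    have hz' : ∀ y, f y ≤ f z := fun y => hz (Set.mem_univ y)
    have : f z = fstar := le_antisymm (hle z) (hfstar ▸ ciSup_le hz')
    have : z ∈ Υ := by rw [hΥ]; exact this
    simp [hne] at this
  set S : Set Z := {z | Metric.infDist z Υ ≤ ε₀} with hS
  -- key: f is close to fstar on a small neighborhood of Υ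
  have key : ∃ ε, 0 < ε ∧ ε ≤ ε₀ ∧ ∀ z, Metric.infDist z Υ ≤ ε → fstar - δ / 2 ≤ f z := by
    by_contra h
    push_neg at h
    have hch : ∀ n : ℕ, ∃ z, Metric.infDist z Υ ≤ ε₀ / (n + 1) ∧ f z < fstar - δ / 2 := by
      intro n
      obtain ⟨z, hz1, hz2⟩ := h (ε₀ / (n + 1)) (by positivity)
        (div_le_self hε₀.le (by exact_mod_cast Nat.succ_le_succ (Nat.zero_le n)))
      exact ⟨z, hz1, hz2⟩
    choose z hz1 hz2 using hch
    obtain ⟨a, -, φ, hφ, hconv⟩ := isCompact_univ.tendsto_subseq (fun n => Set.mem_univ (z n))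
    have hdistconv : Tendsto (fun n => Metric.infDist (z (φ n)) Υ) atTop
        (nhds (Metric.infDist a Υ)) :=
      ((Metric.continuous_infDist_pt Υ).tendsto a).comp hconv
    have hzero : Tendsto (fun n : ℕ => ε₀ / (n + 1 : ℝ)) atTop (nhds 0) :=
      tendsto_const_nhds.div_atTop (tendsto_atTop_add_const_right _ _ tendsto_natCast_atTop_atTop)
    have hda : Metric.infDist a Υ ≤ 0 := by
      refine le_of_tendsto_of_tendsto' hdistconv hzero fun n => ?_
      refine (hz1 (φ n)).trans ?_
      apply div_le_div_of_nonneg_left hε₀.le (by positivity)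
      have hn : (n : ℝ) ≤ φ n := by exact_mod_cast hφ.le_apply
      linarith
    have hda0 : Metric.infDist a Υ = 0 := le_antisymm hda (Metric.infDist_nonneg)
    have haS : a ∈ S := by rw [hS]; simp [hda0, hε₀.le]
    have hacl : a ∈ closure Υ := (Metric.mem_closure_iff_infDist_zero hΥne).2 hda0
    have hfa : ContinuousWithinAt f S a := hcont a haS
    -- f a = fstar via a sequence in Υ
    obtain ⟨y, hyΥ, hy⟩ := mem_closure_iff_seq_limit.1 hacl
    have hyS : ∀ n, y n ∈ S := fun n => by
      rw [hS]; simp [Metric.infDist_zero_of_mem (hyΥ n), hε₀.le]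
    have hyconv : Tendsto y atTop (nhdsWithin a S) :=
      tendsto_nhdsWithin_of_tendsto_nhds_of_eventually_within y hy
        (Eventually.of_forall hyS)
    have hfy : Tendsto (fun n => f (y n)) atTop (nhds (f a)) := hfa.tendsto.comp hyconv
    have hfyconst : (fun n => f (y n)) = fun _ => fstar := by
      funext n
      have := hyΥ n
      rw [hΥ] at this
      exact this
    have hfafstar : f a = fstar := by
      rw [hfyconst] at hfy
      exact (tendsto_nhds_unique tendsto_const_nhds hfy).symm
    -- but also f a ≤ fstar - δ/2
    have hzS : ∀ n, z (φ n) ∈ S := fun n => by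
      rw [hS]
      refine (hz1 (φ n)).trans (div_le_self hε₀.le ?_)
      exact_mod_cast Nat.succ_le_succ (Nat.zero_le _)
    have hzconv : Tendsto (fun n => z (φ n)) atTop (nhdsWithin a S) :=
      tendsto_nhdsWithin_of_tendsto_nhds_of_eventually_within _ hconv
        (Eventually.of_forall hzS)
    have hfz : Tendsto (fun n => f (z (φ n))) atTop (nhds (f a)) := hfa.tendsto.comp hzconv
    have : f a ≤ fstar - δ / 2 :=
      le_of_tendsto hfz (Eventually.of_forall fun n => (hz2 (φ n)).le)
    rw [hfafstar] at this
    linarith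
  obtain ⟨ε, hεpos, hεle, hεf⟩ := key
  set E : Set Z := {z | Metric.infDist z Υ ≤ ε} with hE
  have hEmeas : MeasurableSet E :=
    measurableSet_le (Metric.continuous_infDist_pt Υ).measurable measurable_const
  have hEpos : 0 < μ E := hmass ε hεpos
  set m : ℝ := (μ E).toReal with hm
  have hmpos : 0 < m := ENNReal.toReal_pos hEpos.ne' (measure_ne_top μ E)
  set A : Set Z := {z | fstar - δ ≤ f z} with hA
  have hAmeas : MeasurableSet A := measurableSet_le measurable_const hf
  -- integrability
  have hint : ∀ k : ℕ, Integrable (fun z => Real.exp (k * f z)) μ := by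
    intro k
    refine ⟨((hf.const_mul (k : ℝ)).exp).aestronglyMeasurable, ?_⟩
    refine HasFiniteIntegral.of_bounded (C := Real.exp (k * c)) (ae_of_all _ fun z => ?_)
    rw [Real.norm_eq_abs, Real.abs_exp]
    exact Real.exp_le_exp.2 (mul_le_mul_of_nonneg_left (abs_le.1 (hb z)).2 (Nat.cast_nonneg k))
  -- lower bound on total integral
  have h1 : ∀ k : ℕ, Real.exp (k * (fstar - δ / 2)) * m ≤ ∫ z, Real.exp (k * f z) ∂μ := by
    intro k
    have step1 : ∫ _ in E, Real.exp (k * (fstar - δ / 2)) ∂μ ≤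
        ∫ z in E, Real.exp (k * f z) ∂μ := by
      refine setIntegral_mono_on (integrableOn_const (measure_ne_top μ E) enorm_ne_top)
        ((hint k).integrableOn) hEmeas fun z hz => ?_
      exact Real.exp_le_exp.2 (mul_le_mul_of_nonneg_left (hεf z hz) (Nat.cast_nonneg k))
    rw [setIntegral_const, smul_eq_mul, mul_comm] at step1
    exact step1.trans (setIntegral_le_integral (hint k)
      (ae_of_all _ fun z => (Real.exp_pos _).le))
  have hIpos : ∀ k : ℕ, 0 < ∫ z, Real.exp (k * f z) ∂μ := fun k =>
    lt_of_lt_of_le (by positivity) (h1 k)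
  -- upper bound on the complement integral
  have h2 : ∀ k : ℕ, ∫ z in Aᶜ, Real.exp (k * f z) ∂μ ≤ Real.exp (k * (fstar - δ)) := by
    intro k
    have step1 : ∫ z in Aᶜ, Real.exp (k * f z) ∂μ ≤
        ∫ _ in Aᶜ, Real.exp (k * (fstar - δ)) ∂μ := by
      refine setIntegral_mono_on ((hint k).integrableOn)
        (integrableOn_const (measure_ne_top μ Aᶜ) enorm_ne_top) hAmeas.compl fun z hz => ?_
      have : ¬ (fstar - δ ≤ f z) := hz
      exact Real.exp_le_exp.2 (mul_le_mul_of_nonneg_left (by linarith) (Nat.cast_nonneg k))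
    rw [setIntegral_const, smul_eq_mul] at step1
    refine step1.trans ?_
    have hμ1 : (μ Aᶜ).toReal ≤ 1 := by
      have := prob_le_one (μ := μ) (s := Aᶜ)
      simpa using ENNReal.toReal_mono ENNReal.one_ne_top this
    nlinarith [Real.exp_pos ((k : ℝ) * (fstar - δ)), show μ.real Aᶜ ≤ 1 from hμ1]
  have hsplit : ∀ k : ℕ, (∫ z in A, Real.exp (k * f z) ∂μ) +
      (∫ z in Aᶜ, Real.exp (k * f z) ∂μ) = ∫ z, Real.exp (k * f z) ∂μ := fun k =>
    integral_add_compl hAmeas (hint k)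
  have heq : (fun k : ℕ => (∫ z in A, Real.exp (k * f z) ∂μ) / ∫ z, Real.exp (k * f z) ∂μ) =
      fun k : ℕ => 1 - (∫ z in Aᶜ, Real.exp (k * f z) ∂μ) / ∫ z, Real.exp (k * f z) ∂μ := by
    funext k
    rw [eq_sub_iff_add_eq, ← add_div, hsplit k, div_self (hIpos k).ne']
  show Tendsto (fun k : ℕ => (∫ z in A, Real.exp (k * f z) ∂μ) /
      ∫ z, Real.exp (k * f z) ∂μ) atTop (nhds 1)
  rw [heq]
  have hr : Tendsto (fun k : ℕ =>
      (∫ z in Aᶜ, Real.exp (k * f z) ∂μ) / ∫ z, Real.exp (k * f z) ∂μ) atTop (nhds 0) := by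
    have hBconv : Tendsto (fun k : ℕ => Real.exp (-(δ / 2)) ^ k / m) atTop (nhds 0) := by
      have := (tendsto_pow_atTop_nhds_zero_of_lt_one (r := Real.exp (-(δ / 2))) (Real.exp_nonneg _)
        (Real.exp_lt_one_iff.2 (by linarith))).div_const m
      simpa using this
    refine squeeze_zero (fun k => div_nonneg (setIntegral_nonneg hAmeas.compl
      fun z _ => (Real.exp_pos _).le) (hIpos k).le) (fun k => ?_) hBconv
    have hb1 : (∫ z in Aᶜ, Real.exp (k * f z) ∂μ) / ∫ z, Real.exp (k * f z) ∂μ ≤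
        Real.exp (k * (fstar - δ)) / (Real.exp (k * (fstar - δ / 2)) * m) :=
      div_le_div₀ (Real.exp_nonneg _) (h2 k) (by positivity) (h1 k)
    refine hb1.trans (le_of_eq ?_)
    rw [div_mul_eq_div_div, ← Real.exp_sub]
    congr 2
    rw [← Real.exp_nat_mul]
    congr 1
    ring
  have h10 : Tendsto (fun k : ℕ => 1 -
      (∫ z in Aᶜ, Real.exp (k * f z) ∂μ) / ∫ z, Real.exp (k * f z) ∂μ) atTop (nhds (1 - 0)) :=
    tendsto_const_nhds.sub hr
  simpa using h10
end

section
/- Under the accept-if-no-worse kernel Q of the previous statement, if the initial distribution P₁ satisfies P₁(A(ε)) > 0 for all ε > 0, then for every k the k-step distribution P_k = P₁ Q^k satisfies P_k(A(ε)) ≥ P₁(A(ε)) > 0 for every ε > 0. -/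
open MeasureTheory ProbabilityTheory

theorem stmt_12 {Z : Type*} [MeasurableSpace Z] [Nonempty Z]
    (f : Z → ℝ) (hf : Measurable f)
    (fstar : ℝ) (hfstar : fstar = ⨆ z, f z)
    (T : Kernel Z Z) [IsMarkovKernel T]
    (P : ℕ → Measure Z) [∀ k, IsProbabilityMeasure (P k)]
    (hstep : ∀ k, ∀ s : Set Z, MeasurableSet s →
      P (k + 1) s = ∫⁻ z, (T z (s ∩ {ζ | f z ≤ f ζ}) +
        Set.indicator s (fun z' => T z' {ζ | f ζ < f z'}) z) ∂(P k))
    (hinit : ∀ ε > (0 : ℝ), 0 < P 0 {z | fstar - ε ≤ f z}) :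
    ∀ k, ∀ ε > (0 : ℝ),
      P 0 {z | fstar - ε ≤ f z} ≤ P k {z | fstar - ε ≤ f z} ∧
        0 < P k {z | fstar - ε ≤ f z} := by
  intro k ε hε
  have hA : MeasurableSet {z | fstar - ε ≤ f z} :=
    measurableSet_le measurable_const hf
  have key : ∀ k, P 0 {z | fstar - ε ≤ f z} ≤ P k {z | fstar - ε ≤ f z} := by
    intro k
    induction k with
    | zero => exact le_refl _
    | succ n ih =>
      refine ih.trans ?_
      set A := {z | fstar - ε ≤ f z} with hAdef
      rw [hstep n A hA]
      have hrepr : P n A = ∫⁻ z, A.indicator (fun _ => (1:ENNReal)) z ∂ P n := by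
        simp [lintegral_indicator hA]
      rw [hrepr]
      apply lintegral_mono
      intro z
      by_cases hz : z ∈ A
      · simp only [Set.indicator_of_mem hz]
        have hsub : {ζ | f z ≤ f ζ} ⊆ A := by
          intro ζ hζ
          have hz' : fstar - ε ≤ f z := hz
          exact Set.mem_setOf_eq ▸ le_trans hz' hζ
        have h1 : A ∩ {ζ | f z ≤ f ζ} = {ζ | f z ≤ f ζ} :=
          Set.inter_eq_self_of_subset_right hsub
        rw [h1]
        have hc : {ζ | f z ≤ f ζ}ᶜ = {ζ : Z | f ζ < f z} := by
          ext ζ; simp [not_le]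
        have hm : MeasurableSet {ζ | f z ≤ f ζ} :=
          measurableSet_le measurable_const hf
        have := measure_add_measure_compl (μ := T z) hm
        rw [hc, measure_univ] at this
        exact le_of_eq this.symm
      · simp only [Set.indicator_of_notMem hz]
        exact zero_le
  exact ⟨key k, lt_of_lt_of_le (hinit ε hε) (key k)⟩
end
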